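/- arXiv:1501.03680 — 6 statements merged into one kernel-verified Lean document; each statement's English description precedes it below -/
import Mathlib

section
/- Let 0 < p < ∞, 0 < q < ∞ and let d ≥ 2 be an integer. For every natural number k, the entropy numbers satisfy e_k(S_p^{d−1}, ℓ_q^d) ≥ e_k(B_p^{d−1}, ℓ_q^{d−1}), where B_p^{d−1} is the unit p-ball in ℝ^{d−1}. -/
open scoped Pointwise BigOperators

/-- The `ℓ_p` (quasi-)norm on `ℝ^d` for `0 < p < ∞`. -/
noncomputable def pNorm (p : ℝ) {d : ℕ} (x : Fin d → ℝ) : ℝ :=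
  (∑ i, |x i| ^ p) ^ (1 / p)

/-- The `ℓ_∞` norm on `ℝ^d`. -/
noncomputable def supNorm {d : ℕ} (x : Fin d → ℝ) : ℝ :=
  ⨆ i, |x i|

/-- The closed unit ball of `ℓ_p^d`. -/
def pBall (p : ℝ) (d : ℕ) : Set (Fin d → ℝ) := {x | pNorm p x ≤ 1}

/-- The unit sphere of `ℓ_p^d`. -/
def pSphere (p : ℝ) (d : ℕ) : Set (Fin d → ℝ) := {x | pNorm p x = 1}

/-- The closed unit ball of `ℓ_∞^d`. -/
def supBall (d : ℕ) : Set (Fin d → ℝ) := {x | supNorm x ≤ 1}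

/-- The `k`-th (dyadic) entropy number of `K` with respect to the "unit ball" `B`:
the infimum of all `ε > 0` such that `K` can be covered by `2^(k-1)` translates of `ε • B`. -/
noncomputable def entropyNumber {d : ℕ} (K B : Set (Fin d → ℝ)) (k : ℕ) : ℝ :=
  sInf {ε : ℝ | 0 < ε ∧ ∃ c : Fin (2 ^ (k - 1)) → (Fin d → ℝ),
    K ⊆ ⋃ j, (c j +ᵥ ε • B)}

/-! Dropping the last coordinate maps `S_p^{d-1}` onto `B_p^{d-1}` (a point `x` of the ball lifts
to `(x, (1 - ‖x‖_p^p)^{1/p})` on the sphere) and maps `B_q^d` into `B_q^{d-1}`. Being linear, it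
turns every covering of the sphere by translates of `ε B_q^d` into a covering of the ball by the
same number of translates of `ε B_q^{d-1}`. -/

open Set

theorem entropyNumber_le_of_linearMap {m n : ℕ} {K B : Set (Fin m → ℝ)} {K' B' : Set (Fin n → ℝ)}
    (π : (Fin n → ℝ) →ₗ[ℝ] (Fin m → ℝ)) (hK : K ⊆ π '' K') (hB : MapsTo π B' B)
    (hK' : ∃ r : ℝ, 0 < r ∧ K' ⊆ r • B') (k : ℕ) :
    entropyNumber K B k ≤ entropyNumber K' B' k := by
  -- `hK'` rules out an empty set of covering radii for `K'`, whose infimum would be the junk `0`.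
  refine csInf_le_csInf ⟨0, fun ε hε => hε.1.le⟩ ?_ ?_
  · obtain ⟨r, hr, hK'r⟩ := hK'
    refine ⟨r, hr, 0, fun x hx => mem_iUnion.2 ⟨⟨0, Nat.two_pow_pos _⟩, ?_⟩⟩
    simpa using hK'r hx
  · rintro ε ⟨hε, c, hc⟩
    refine ⟨hε, π ∘ c, ?_⟩
    intro x hx
    obtain ⟨y, hy, rfl⟩ := hK hx
    obtain ⟨j, _, ⟨b, hb, rfl⟩, rfl⟩ := mem_iUnion.1 (hc hy)
    exact mem_iUnion.2 ⟨j, ε • π b, ⟨π b, hB hb, rfl⟩, by simp⟩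

section pNorm

variable {d : ℕ} {p : ℝ}

theorem sum_abs_rpow_nonneg (p : ℝ) (x : Fin d → ℝ) : 0 ≤ ∑ i, |x i| ^ p :=
  Finset.sum_nonneg fun _ _ => Real.rpow_nonneg (abs_nonneg _) _

theorem pNorm_le_one_iff (hp : 0 < p) {x : Fin d → ℝ} :
    pNorm p x ≤ 1 ↔ ∑ i, |x i| ^ p ≤ 1 := by
  rw [pNorm, one_div, Real.rpow_inv_le_iff_of_pos (sum_abs_rpow_nonneg p x) zero_le_one hp,
    Real.one_rpow]

theorem pNorm_eq_one_iff (hp : 0 < p) {x : Fin d → ℝ} :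
    pNorm p x = 1 ↔ ∑ i, |x i| ^ p = 1 := by
  rw [pNorm, one_div, Real.rpow_inv_eq (sum_abs_rpow_nonneg p x) zero_le_one hp.ne',
    Real.one_rpow]

theorem pNorm_smul (hp : 0 < p) {c : ℝ} (hc : 0 ≤ c) (x : Fin d → ℝ) :
    pNorm p (c • x) = c * pNorm p x := by
  have hterm : ∀ i, |(c • x) i| ^ p = c ^ p * |x i| ^ p := fun i => by
    rw [Pi.smul_apply, smul_eq_mul, abs_mul, abs_of_nonneg hc, Real.mul_rpow hc (abs_nonneg _)]
  simp only [pNorm, hterm, ← Finset.mul_sum]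
  rw [Real.mul_rpow (by positivity) (sum_abs_rpow_nonneg p x), ← Real.rpow_mul hc,
    mul_one_div_cancel hp.ne', Real.rpow_one]

theorem mem_smul_pBall_iff (hp : 0 < p) {ε : ℝ} (hε : 0 < ε) {x : Fin d → ℝ} :
    x ∈ ε • pBall p d ↔ pNorm p x ≤ ε := by
  rw [mem_smul_set_iff_inv_smul_mem₀ hε.ne', pBall, mem_ofPred_eq,
    pNorm_smul hp (inv_nonneg.2 hε.le), inv_mul_le_iff₀ hε, mul_one]

theorem abs_le_one_of_mem_pBall (hp : 0 < p) {x : Fin d → ℝ} (hx : x ∈ pBall p d) (i : Fin d) :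
    |x i| ≤ 1 := by
  by_contra! hi
  have hlt : 1 < |x i| ^ p := Real.one_lt_rpow hi hp
  have hle : |x i| ^ p ≤ ∑ j, |x j| ^ p :=
    Finset.single_le_sum (fun j _ => Real.rpow_nonneg (abs_nonneg (x j)) p) (Finset.mem_univ i)
  linarith [(pNorm_le_one_iff hp).1 hx]

theorem pNorm_le_of_abs_le_one (hp : 0 < p) {x : Fin d → ℝ} (hx : ∀ i, |x i| ≤ 1) :
    pNorm p x ≤ (d : ℝ) ^ (1 / p) := by
  refine Real.rpow_le_rpow (sum_abs_rpow_nonneg p x) ?_ (by positivity)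
  calc ∑ i, |x i| ^ p ≤ ∑ _i : Fin d, (1 : ℝ) :=
        Finset.sum_le_sum fun i _ => Real.rpow_le_one (abs_nonneg _) (hx i) hp.le
    _ = d := by simp

theorem pBall_subset_smul_pBall {q : ℝ} (hp : 0 < p) (hq : 0 < q) (hd : d ≠ 0) :
    pBall p d ⊆ (d : ℝ) ^ (1 / q) • pBall q d := fun _ hx =>
  (mem_smul_pBall_iff hq (by positivity)).2
    (pNorm_le_of_abs_le_one hq (abs_le_one_of_mem_pBall hp hx))

theorem pSphere_subset_pBall : pSphere p d ⊆ pBall p d := fun _ hx => le_of_eq hx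

theorem pNorm_comp_castSucc_le (hp : 0 < p) (x : Fin (d + 1) → ℝ) :
    pNorm p (x ∘ Fin.castSucc) ≤ pNorm p x := by
  refine Real.rpow_le_rpow (sum_abs_rpow_nonneg p _) ?_ (by positivity)
  rw [Fin.sum_univ_castSucc (f := fun i => |x i| ^ p)]
  exact le_add_of_nonneg_right (Real.rpow_nonneg (abs_nonneg _) _)

theorem mapsTo_funLeft_castSucc_pBall (hp : 0 < p) :
    MapsTo (LinearMap.funLeft ℝ ℝ Fin.castSucc) (pBall p (d + 1)) (pBall p d) := fun x hx =>
  (pNorm_comp_castSucc_le hp x).trans hx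

theorem pBall_subset_image_funLeft_castSucc_pSphere (hp : 0 < p) :
    pBall p d ⊆ LinearMap.funLeft ℝ ℝ Fin.castSucc '' pSphere p (d + 1) := by
  intro x hx
  have hsum := (pNorm_le_one_iff hp).1 hx
  set t := (1 - ∑ i, |x i| ^ p) ^ (1 / p)
  refine ⟨Fin.snoc (α := fun _ => ℝ) x t, ?_, funext fun i => by simp [LinearMap.funLeft_apply]⟩
  rw [pSphere, mem_ofPred_eq, pNorm_eq_one_iff hp, Fin.sum_univ_castSucc]
  simp only [Fin.snoc_castSucc, Fin.snoc_last]
  rw [abs_of_nonneg (by positivity), ← Real.rpow_mul (by linarith), one_div_mul_cancel hp.ne',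
    Real.rpow_one]
  ring

end pNorm

/-- For `0 < p, q < ∞`, `d ≥ 2` and every `k`,
`e_k(S_p^{d-1}, ℓ_q^d) ≥ e_k(B_p^{d-1}, ℓ_q^{d-1})`. -/
theorem entropy_pSphere_ge_ball (p q : ℝ) (hp : 0 < p) (hq : 0 < q)
    (d : ℕ) (hd : 2 ≤ d) (k : ℕ) :
    entropyNumber (pBall p (d - 1)) (pBall q (d - 1)) k ≤
      entropyNumber (pSphere p d) (pBall q d) k := by
  obtain ⟨m, rfl⟩ : ∃ m, d = m + 1 := ⟨d - 1, by omega⟩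
  exact entropyNumber_le_of_linearMap (LinearMap.funLeft ℝ ℝ Fin.castSucc)
    (pBall_subset_image_funLeft_castSucc_pSphere hp) (mapsTo_funLeft_castSucc_pBall hq)
    ⟨_, by positivity, pSphere_subset_pBall.trans (pBall_subset_smul_pBall hp hq m.succ_ne_zero)⟩ k
end

section
/- Let 0 < p < ∞, let d ≥ 2 be an integer, and let x, y ∈ ℝ^d satisfy 0 ≤ x_j ≤ y_j for all j, x_d = y_d = 0, and ‖y‖_p ≤ 1. Suppose σ, τ ∈ [0, 1] satisfy ‖x + σ·𝟙‖_p = 1 and ‖y + τ·𝟙‖_p = 1. Then τ ≤ σ ≤ τ + max_{1≤j≤d} |x_j − y_j|. -/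
open scoped Pointwise BigOperators

lemma pNorm_eq_one_sum {p : ℝ} (hp : 0 < p) {d : ℕ} {z : Fin d → ℝ}
    (h : pNorm p z = 1) : ∑ i, |z i| ^ p = 1 := by
  have hA : (0:ℝ) ≤ ∑ i, |z i| ^ p :=
    Finset.sum_nonneg fun i _ => Real.rpow_nonneg (abs_nonneg _) _
  rw [pNorm] at h
  have := congrArg (fun a : ℝ => a ^ p) h
  simpa [one_div, Real.rpow_inv_rpow hA hp.ne'] using this

/-- For `0 < p < ∞`, `d ≥ 2` and `x, y ∈ ℝ^d` with `0 ≤ x_j ≤ y_j`,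
`x_d = y_d = 0`, `‖y‖_p ≤ 1`, if `σ, τ ∈ [0,1]` satisfy `‖x + σ·𝟙‖_p = 1` and
`‖y + τ·𝟙‖_p = 1`, then `τ ≤ σ ≤ τ + ‖x − y‖_∞`. -/
theorem shift_monotone (p : ℝ) (hp : 0 < p) (d : ℕ) (hd : 2 ≤ d)
    (x y : Fin d → ℝ) (hx : ∀ j, 0 ≤ x j) (hxy : ∀ j, x j ≤ y j)
    (hxd : x ⟨d - 1, by omega⟩ = 0) (hyd : y ⟨d - 1, by omega⟩ = 0)
    (hy : pNorm p y ≤ 1)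
    (σ τ : ℝ) (hσ : σ ∈ Set.Icc (0 : ℝ) 1) (hτ : τ ∈ Set.Icc (0 : ℝ) 1)
    (hσ1 : pNorm p (x + σ • (1 : Fin d → ℝ)) = 1)
    (hτ1 : pNorm p (y + τ • (1 : Fin d → ℝ)) = 1) :
    τ ≤ σ ∧ σ ≤ τ + supNorm (x - y) := by

  have hσ0 := hσ.1
  have hτ0 := hτ.1
  haveI : Nonempty (Fin d) := ⟨⟨0, by omega⟩⟩
  have hxs : ∀ i, (0:ℝ) ≤ x i + σ := fun i => add_nonneg (hx i) hσ0
  have hyt : ∀ i, (0:ℝ) ≤ y i + τ := fun i => add_nonneg ((hx i).trans (hxy i)) hτ0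
  have hS1 : ∑ i, (x i + σ) ^ p = 1 := by
    have := pNorm_eq_one_sum hp hσ1
    simpa [abs_of_nonneg, hxs] using this
  have hT1 : ∑ i, (y i + τ) ^ p = 1 := by
    have := pNorm_eq_one_sum hp hτ1
    simpa [abs_of_nonneg, hyt] using this
  set M := supNorm (x - y) with hM
  have hMle : ∀ i, y i - x i ≤ M := by
    intro i
    have h1 : |(x - y) i| ≤ ⨆ j, |(x - y) j| :=
      le_ciSup (f := fun j => |(x - y) j|) (Set.Finite.bddAbove (Set.finite_range _)) i
    have h2 : |(x - y) i| ≤ M := by rw [hM, supNorm]; exact h1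
    simp only [Pi.sub_apply] at h2
    rw [abs_sub_comm] at h2
    linarith [le_abs_self (y i - x i)]
  have hM0 : 0 ≤ M := le_trans (sub_nonneg.mpr (hxy ⟨0, by omega⟩)) (hMle ⟨0, by omega⟩)
  constructor
  · by_contra h
    push_neg at h
    have : ∑ i, (x i + σ) ^ p < ∑ i, (y i + τ) ^ p := by
      apply Finset.sum_lt_sum_of_nonempty Finset.univ_nonempty
      intro i _
      exact Real.rpow_lt_rpow (hxs i) (by linarith [hxy i]) hp
    linarith
  · by_contra h
    push_neg at h
    have : ∑ i, (y i + τ) ^ p < ∑ i, (x i + σ) ^ p := by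
      apply Finset.sum_lt_sum_of_nonempty Finset.univ_nonempty
      intro i _
      exact Real.rpow_lt_rpow (hyt i) (by linarith [hMle i]) hp
    linarith
end

section
/- Let 0 < p < ∞ and let d ≥ 2 be an integer. For every natural number k > d + ⌈log₂ d⌉, the entropy numbers satisfy e_k(S_p^{d−1}, ℓ_∞^d) ≤ 2 · e_{k − d − ⌈log₂ d⌉}(B_p^{d−1}, ℓ_∞^{d−1}), where B_p^{d−1} is the unit p-ball in ℝ^{d−1}. -/
open scoped Pointwise BigOperators

/-!
Lower all magnitudes of a point `x` of the `ℓ_p^d`-sphere by the least one, `|x i|`, and drop the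
coordinate `i`: the result lies in the `ℓ_p^{d-1}`-ball. Record `x` by `i`, its signs
(`d ⋅ 2^d ≤ 2^(d + ⌈log₂ d⌉)` choices) and a ball of radius `ε` containing its lowered
magnitudes. Two points with the same record are `4ε`-close in `ℓ_∞`: their shifts differ by at
most `2ε`, since otherwise one point would dominate the other coordinatewise, which is impossible
on the sphere. Finally a set of `ℓ_∞`-diameter `4ε` lies in a closed ball of radius `2ε`.
-/

open Metric Set

lemma supBall_eq_closedBall (d : ℕ) : supBall d = closedBall 0 1 := by
  ext x
  simp only [supBall, supNorm, mem_ofPred_eq, mem_closedBall_zero_iff,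
    pi_norm_le_iff_of_nonneg zero_le_one, Real.norm_eq_abs]
  exact ⟨fun h i => (le_ciSup (finite_range _).bddAbove i).trans h,
    fun h => Real.iSup_le h zero_le_one⟩

lemma vadd_smul_supBall {d : ℕ} (c : Fin d → ℝ) {ε : ℝ} (hε : 0 ≤ ε) :
    c +ᵥ ε • supBall d = closedBall c ε := by
  rw [supBall_eq_closedBall, smul_unitClosedBall, Real.norm_of_nonneg hε, vadd_closedBall,
    vadd_eq_add, add_zero]

lemma Real.exists_subset_closedBall_of_forall_dist_le {A : Set ℝ} {r : ℝ} (hr : 0 ≤ r)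
    (hA : ∀ x ∈ A, ∀ y ∈ A, dist x y ≤ 2 * r) : ∃ z, A ⊆ closedBall z r := by
  have hbdd : Bornology.IsBounded A := isBounded_iff.2 ⟨_, hA⟩
  have hdiam : sSup A - sInf A ≤ 2 * r :=
    Real.diam_eq hbdd ▸ diam_le_of_forall_dist_le (by positivity) hA
  refine ⟨(sInf A + sSup A) / 2, hbdd.subset_Icc_sInf_sSup.trans ?_⟩
  rw [Real.Icc_eq_closedBall]
  exact closedBall_subset_closedBall (by linarith)

lemma exists_subset_closedBall_of_forall_dist_le {ι : Type*} [Fintype ι] {A : Set (ι → ℝ)}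
    {r : ℝ} (hr : 0 ≤ r) (hA : ∀ x ∈ A, ∀ y ∈ A, dist x y ≤ 2 * r) :
    ∃ z, A ⊆ closedBall z r := by
  have hcoord (l : ι) : ∃ z, (fun x => x l) '' A ⊆ closedBall z r :=
    Real.exists_subset_closedBall_of_forall_dist_le hr <| by
      rintro _ ⟨x, hx, rfl⟩ _ ⟨y, hy, rfl⟩
      exact (dist_le_pi_dist x y l).trans (hA x hx y hy)
  choose z hz using hcoord
  exact ⟨z, fun x hx => (dist_pi_le_iff hr).2 fun l => hz l (mem_image_of_mem _ hx)⟩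

section PNorm

variable {p : ℝ} {n : ℕ}

lemma pNorm_rpow (hp : 0 < p) (x : Fin n → ℝ) : pNorm p x ^ p = ∑ l, |x l| ^ p := by
  rw [pNorm, one_div, Real.rpow_inv_rpow (by positivity) hp.ne']

lemma pNorm_nonneg (x : Fin n → ℝ) : 0 ≤ pNorm p x := by
  unfold pNorm; positivity

lemma pNorm_le_pNorm_iff (hp : 0 < p) {n' : ℕ} (x : Fin n → ℝ) (y : Fin n' → ℝ) :
    pNorm p x ≤ pNorm p y ↔ ∑ l, |x l| ^ p ≤ ∑ l, |y l| ^ p := by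
  rw [← Real.rpow_le_rpow_iff (pNorm_nonneg x) (pNorm_nonneg y) hp, pNorm_rpow hp,
    pNorm_rpow hp]

lemma sum_abs_rpow_eq_one_of_mem_pSphere (hp : 0 < p) {x : Fin n → ℝ}
    (hx : x ∈ pSphere p n) : ∑ l, |x l| ^ p = 1 := by
  rw [← pNorm_rpow hp, show pNorm p x = 1 from hx, Real.one_rpow]

lemma abs_le_pNorm (hp : 0 < p) (x : Fin n → ℝ) (l : Fin n) : |x l| ≤ pNorm p x := by
  rw [← Real.rpow_le_rpow_iff (abs_nonneg (x l)) (pNorm_nonneg (p := p) x) hp, pNorm_rpow hp]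
  exact Finset.single_le_sum (f := fun i => |x i| ^ p) (fun i _ => by positivity)
    (Finset.mem_univ l)

lemma pNorm_le_pNorm_of_abs_le (hp : 0 < p) {x y : Fin n → ℝ} (h : ∀ l, |x l| ≤ |y l|) :
    pNorm p x ≤ pNorm p y :=
  (pNorm_le_pNorm_iff hp x y).2 <| Finset.sum_le_sum fun l _ =>
    Real.rpow_le_rpow (abs_nonneg _) (h l) hp.le

lemma pNorm_comp_succAbove_le (hp : 0 < p) (x : Fin (n + 1) → ℝ) (i : Fin (n + 1)) :
    pNorm p (x ∘ i.succAbove) ≤ pNorm p x := by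
  rw [pNorm_le_pNorm_iff hp, Fin.sum_univ_succAbove _ i]
  exact le_add_of_nonneg_left (by positivity)

lemma pBall_subset_closedBall (hp : 0 < p) : pBall p n ⊆ closedBall 0 1 := fun x hx =>
  mem_closedBall_zero_iff.2 <| (pi_norm_le_iff_of_nonneg zero_le_one).2 fun l =>
    (abs_le_pNorm hp x l).trans hx

lemma nonpos_of_forall_abs_add_le (hp : 0 < p) {x y : Fin n → ℝ} (hx : x ∈ pSphere p n)
    (hy : y ∈ pSphere p n) {c : ℝ} (h : ∀ l, |x l| + c ≤ |y l|) : c ≤ 0 := by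
  by_contra! hc
  have hsum := sum_abs_rpow_eq_one_of_mem_pSphere hp hx
  have hlt : ∑ l, |x l| ^ p < ∑ l, |y l| ^ p :=
    Finset.sum_lt_sum_of_nonempty (Finset.nonempty_of_sum_ne_zero (hsum ▸ one_ne_zero)) fun l _ =>
      Real.rpow_lt_rpow (abs_nonneg _) (by linarith [h l]) hp
  rw [hsum, sum_abs_rpow_eq_one_of_mem_pSphere hp hy] at hlt
  exact hlt.false

end PNorm

lemma abs_sub_eq_abs_abs_sub_abs {a b : ℝ} (h : 0 ≤ a ↔ 0 ≤ b) : |a - b| = |(|a| - |b|)| := by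
  by_cases ha : 0 ≤ a
  · rw [abs_of_nonneg ha, abs_of_nonneg (h.1 ha)]
  · have hb : b < 0 := not_le.1 (mt h.2 ha)
    rw [abs_of_neg (not_le.1 ha), abs_of_neg hb, neg_sub_neg, abs_sub_comm]

section ShiftedAbs

variable {p : ℝ} {n : ℕ}

noncomputable def shiftedAbs (x : Fin (n + 1) → ℝ) (i : Fin (n + 1)) : Fin n → ℝ :=
  fun l => |x (i.succAbove l)| - |x i|

lemma shiftedAbs_mem_pBall (hp : 0 < p) {x : Fin (n + 1) → ℝ} (hx : x ∈ pBall p (n + 1))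
    {i : Fin (n + 1)} (hi : ∀ l, |x i| ≤ |x l|) : shiftedAbs x i ∈ pBall p n := by
  refine (pNorm_le_pNorm_of_abs_le hp fun l => ?_).trans
    ((pNorm_comp_succAbove_le hp x i).trans hx)
  rw [shiftedAbs, abs_of_nonneg (sub_nonneg.2 (hi _))]
  exact sub_le_self _ (abs_nonneg _)

lemma dist_le_of_dist_shiftedAbs_le (hp : 0 < p) {x y : Fin (n + 1) → ℝ}
    (hx : x ∈ pSphere p (n + 1)) (hy : y ∈ pSphere p (n + 1)) (hsign : ∀ l, 0 ≤ x l ↔ 0 ≤ y l)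
    {i : Fin (n + 1)} {δ : ℝ} (h : dist (shiftedAbs x i) (shiftedAbs y i) ≤ δ) :
    dist x y ≤ 2 * δ := by
  have hδ : 0 ≤ δ := dist_nonneg.trans h
  have hshift (l : Fin (n + 1)) : |(|x l| - |x i|) - (|y l| - |y i|)| ≤ δ := by
    rcases eq_or_ne l i with rfl | hl
    · simpa using hδ
    · obtain ⟨l', rfl⟩ := Fin.exists_succAbove_eq hl
      exact (dist_le_pi_dist _ _ l').trans h
  have hyx : |y i| - |x i| ≤ δ := by
    have := nonpos_of_forall_abs_add_le hp hx hy (c := |y i| - |x i| - δ) fun l => by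
      linarith [(abs_le.1 (hshift l)).2]
    linarith
  have hxy : |x i| - |y i| ≤ δ := by
    have := nonpos_of_forall_abs_add_le hp hy hx (c := |x i| - |y i| - δ) fun l => by
      linarith [(abs_le.1 (hshift l)).1]
    linarith
  refine (dist_pi_le_iff (by positivity)).2 fun l => ?_
  have := abs_le.1 (hshift l)
  rw [Real.dist_eq, abs_sub_eq_abs_abs_sub_abs (hsign l), abs_le]
  constructor <;> linarith

end ShiftedAbs

theorem exists_pSphere_subset_iUnion_closedBall {p ε : ℝ} {n : ℕ} {ι : Type*} (hp : 0 < p)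
    (hε : 0 ≤ ε) (c : ι → Fin n → ℝ) (hc : pBall p n ⊆ ⋃ j, closedBall (c j) ε) :
    ∃ g : Fin (n + 1) × (Fin (n + 1) → Bool) × ι → Fin (n + 1) → ℝ,
      pSphere p (n + 1) ⊆ ⋃ κ, closedBall (g κ) (2 * ε) := by
  choose i hmin using fun x : Fin (n + 1) → ℝ => Finite.exists_min fun l => |x l|
  choose j hj using fun x : pSphere p (n + 1) =>
    mem_iUnion.1 (hc (shiftedAbs_mem_pBall hp (le_of_eq x.2) (hmin x)))
  let code (x : pSphere p (n + 1)) : Fin (n + 1) × (Fin (n + 1) → Bool) × ι :=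
    (i x, fun l => decide (0 ≤ x.1 l), j x)
  have hfiber (κ) : ∃ z, Subtype.val '' (code ⁻¹' {κ}) ⊆ closedBall z (2 * ε) := by
    refine exists_subset_closedBall_of_forall_dist_le (by positivity) ?_
    rintro _ ⟨x, rfl, rfl⟩ _ ⟨y, hcode, rfl⟩
    simp only [code, mem_preimage, mem_singleton_iff, Prod.mk.injEq, funext_iff,
      decide_eq_decide] at hcode
    obtain ⟨hiy, hsign, hjy⟩ := hcode
    have hx := hj x
    have hy := hj y
    rw [hiy, hjy] at hy
    exact dist_le_of_dist_shiftedAbs_le hp x.2 y.2 (fun l => (hsign l).symm)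
      ((dist_triangle_right _ _ _).trans (by linarith [mem_closedBall.1 hx, mem_closedBall.1 hy]))
  choose g hg using hfiber
  exact ⟨g, fun x hx => mem_iUnion.2 ⟨code ⟨x, hx⟩, hg _ ⟨⟨x, hx⟩, rfl, rfl⟩⟩⟩

def IsCoveredByBalls {X : Type*} [PseudoMetricSpace X] (K : Set X) (N : ℕ) (ε : ℝ) : Prop :=
  ∃ c : Fin N → X, K ⊆ ⋃ j, closedBall (c j) ε

lemma IsCoveredByBalls.of_card_le {X T : Type*} [PseudoMetricSpace X] [Nonempty X] [Fintype T]
    {K : Set X} {N : ℕ} {ε : ℝ} (g : T → X) (hK : K ⊆ ⋃ t, closedBall (g t) ε)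
    (hT : Fintype.card T ≤ N) : IsCoveredByBalls K N ε := by
  obtain ⟨e⟩ := Function.Embedding.nonempty_of_card_le (hT.trans (Fintype.card_fin N).ge)
  refine ⟨Function.extend e g fun _ => Classical.arbitrary X, hK.trans ?_⟩
  exact iUnion_subset fun t => subset_iUnion_of_subset (e t) <| by
    rw [e.injective.extend_apply]

lemma entropyNumber_supBall {d : ℕ} (K : Set (Fin d → ℝ)) (k : ℕ) :
    entropyNumber K (supBall d) k = sInf {ε | 0 < ε ∧ IsCoveredByBalls K (2 ^ (k - 1)) ε} := by
  unfold entropyNumber IsCoveredByBalls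
  congr! 1
  ext ε
  refine and_congr_right fun hε => ?_
  simp only [vadd_smul_supBall _ hε.le]

lemma entropyNumber_supBall_le_mul {d d' : ℕ} {K : Set (Fin d → ℝ)} {K' : Set (Fin d' → ℝ)}
    {k k' : ℕ} {C : ℝ} (hC : 0 < C) (hK' : ∃ ε > 0, IsCoveredByBalls K' (2 ^ (k' - 1)) ε)
    (h : ∀ ε > 0, IsCoveredByBalls K' (2 ^ (k' - 1)) ε →
      IsCoveredByBalls K (2 ^ (k - 1)) (C * ε)) :
    entropyNumber K (supBall d) k ≤ C * entropyNumber K' (supBall d') k' := by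
  rw [entropyNumber_supBall, entropyNumber_supBall, ← div_le_iff₀' hC]
  obtain ⟨ε₀, hε₀, hK'ε₀⟩ := hK'
  refine le_csInf ⟨ε₀, hε₀, hK'ε₀⟩ fun ε ⟨hε, hK'ε⟩ => (div_le_iff₀' hC).2 ?_
  exact csInf_le ⟨0, fun _ hε => hε.1.le⟩ ⟨by positivity, h ε hε hK'ε⟩

lemma mul_two_pow_mul_two_pow_le {d k : ℕ} (hk : d + Nat.clog 2 d < k) :
    d * (2 ^ d * 2 ^ (k - d - Nat.clog 2 d - 1)) ≤ 2 ^ (k - 1) := by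
  have hsplit : 2 ^ (k - 1) = 2 ^ Nat.clog 2 d * (2 ^ d * 2 ^ (k - d - Nat.clog 2 d - 1)) := by
    rw [← pow_add, ← pow_add]
    congr 1
    omega
  rw [hsplit]
  exact Nat.mul_le_mul_right _ (Nat.le_pow_clog one_lt_two d)

/-- For `0 < p < ∞`, `d ≥ 2` and every `k > d + ⌈log₂ d⌉`,
`e_k(S_p^{d-1}, ℓ_∞^d) ≤ 2 · e_{k - d - ⌈log₂ d⌉}(B_p^{d-1}, ℓ_∞^{d-1})`. -/
theorem entropy_pSphere_le_shifted_ball (p : ℝ) (hp : 0 < p) (d : ℕ) (hd : 2 ≤ d)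
    (k : ℕ) (hk : d + Nat.clog 2 d < k) :
    entropyNumber (pSphere p d) (supBall d) k ≤
      2 * entropyNumber (pBall p (d - 1)) (supBall (d - 1)) (k - d - Nat.clog 2 d) := by
  obtain ⟨n, rfl⟩ : ∃ n, d = n + 1 := ⟨d - 1, by omega⟩
  rw [Nat.add_sub_cancel]
  refine entropyNumber_supBall_le_mul two_pos ⟨1, one_pos, ?_⟩ fun ε hε ⟨c, hc⟩ => ?_
  · refine IsCoveredByBalls.of_card_le (T := Unit) (fun _ => 0) ?_ Nat.one_le_two_pow
    simpa only [iUnion_const] using pBall_subset_closedBall hp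
  · obtain ⟨g, hg⟩ := exists_pSphere_subset_iUnion_closedBall hp hε.le c hc
    refine IsCoveredByBalls.of_card_le g hg ?_
    simpa [Fintype.card_prod, Fintype.card_fun] using mul_two_pow_mul_two_pow_le hk
end

section
/- Let ‖·‖_X be a continuous quasi-norm on ℝ^d (d ≥ 2), with unit ball B_X = {x : ‖x‖_X ≤ 1} and unit sphere S_X = {x : ‖x‖_X = 1}, and let B_Y ⊆ ℝ^d be the unit ball of a quasi-norm ‖·‖_Y on ℝ^d. For i ∈ {1, …, d} let P_i : ℝ^d → ℝ^d be the orthogonal projection setting the i-th coordinate to zero. Then for every natural number k and every i, the entropy numbers satisfy e_k(P_i(B_X), P_i(B_Y)) ≤ e_k(S_X, B_Y); in particular e_k(S_X, B_Y) ≥ max_{1≤i≤d} e_k(P_i(B_X), P_i(B_Y)). -/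
open scoped Pointwise BigOperators

/-- A quasi-norm on `ℝ^d`: nonnegative, definite, absolutely homogeneous, and satisfying the
quasi-triangle inequality `‖x + y‖ ≤ C(‖x‖ + ‖y‖)` for some `C ≥ 1`. -/
def IsQuasiNorm {d : ℕ} (f : (Fin d → ℝ) → ℝ) : Prop :=
  (∀ x, 0 ≤ f x) ∧ (∀ x, f x = 0 ↔ x = 0) ∧
  (∀ (l : ℝ) (x), f (l • x) = |l| * f x) ∧
  (∃ C : ℝ, 1 ≤ C ∧ ∀ x y, f (x + y) ≤ C * (f x + f y))

/-- The orthogonal projection of `ℝ^d` onto the hyperplane `{x : x_i = 0}`,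
setting the `i`-th coordinate to zero. -/
def proj {d : ℕ} (i : Fin d) (x : Fin d → ℝ) : Fin d → ℝ :=
  Function.update x i 0

/-- Monotonicity of a quasi-norm: for `x, y` lying in the same closed orthant
(equivalently `x_j y_j ≥ 0` for all `j`) with `|x_j| ≤ |y_j|` for all `j`, `‖x‖ ≤ ‖y‖`. -/
def IsMonotoneQuasiNorm {d : ℕ} (f : (Fin d → ℝ) → ℝ) : Prop :=
  ∀ x y : Fin d → ℝ, (∀ j, 0 ≤ x j * y j) → (∀ j, |x j| ≤ |y j|) → f x ≤ f y

/-!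
Every point of `P_i(B_X)` lifts to the sphere `S_X`: pushing the `i`-th coordinate of a point of
`B_X` to infinity, the continuous function `‖·‖_X` passes through `1`, and the projection does not
change. So projecting a cover of `S_X` by translates of `ε B_Y` gives a cover of `P_i(B_X)` by
translates of `ε P_i(B_Y)`. Such covers exist at all because `S_X` is `‖·‖_Y`-bounded: by
compactness of the sup-norm sphere a continuous quasi-norm dominates a multiple of the sup norm,
and every quasi-norm is dominated by one.
-/

def coveringRadii {d : ℕ} (K B : Set (Fin d → ℝ)) (k : ℕ) : Set ℝ :=
  {ε : ℝ | 0 < ε ∧ ∃ c : Fin (2 ^ (k - 1)) → (Fin d → ℝ), K ⊆ ⋃ j, (c j +ᵥ ε • B)}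

section EntropyNumber

variable {d : ℕ} {K K' B B' : Set (Fin d → ℝ)} {k : ℕ}

theorem entropyNumber_le_entropyNumber (hne : (coveringRadii K B k).Nonempty)
    (hsub : coveringRadii K B k ⊆ coveringRadii K' B' k) :
    entropyNumber K' B' k ≤ entropyNumber K B k :=
  csInf_le_csInf ⟨0, fun _ hε => hε.1.le⟩ hne hsub

theorem coveringRadii_nonempty_of_subset_smul {r : ℝ} (hr : 0 < r) (hK : K ⊆ r • B) :
    (coveringRadii K B k).Nonempty :=
  ⟨r, hr, fun _ => 0, hK.trans fun _ hx =>
    Set.mem_iUnion.2 ⟨⟨0, Nat.two_pow_pos _⟩, by rwa [zero_vadd]⟩⟩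

theorem coveringRadii_subset_image (f : (Fin d → ℝ) →ₗ[ℝ] (Fin d → ℝ)) (hK : K' ⊆ f '' K) :
    coveringRadii K B k ⊆ coveringRadii K' (f '' B) k := by
  rintro ε ⟨hε, c, hcov⟩
  refine ⟨hε, fun j => f (c j), hK.trans ((Set.image_mono hcov).trans_eq ?_)⟩
  simp only [Set.image_iUnion, Set.image_vadd_distrib, image_smul_set]

end EntropyNumber

def projₗ {d : ℕ} (i : Fin d) : (Fin d → ℝ) →ₗ[ℝ] (Fin d → ℝ) where
  toFun := proj i
  map_add' a b := by simpa [proj] using Function.update_add a b i 0 0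
  map_smul' t a := by simpa [proj] using Function.update_smul t a i 0

theorem Finset.apply_sum_le_pow_card_mul_sum {ι M : Type*} [AddCommMonoid M] {f : M → ℝ}
    {C : ℝ} (hC : 1 ≤ C) (hf : ∀ x, 0 ≤ f x) (hf_zero : f 0 = 0)
    (htri : ∀ x y, f (x + y) ≤ C * (f x + f y)) (s : Finset ι) (g : ι → M) :
    f (∑ j ∈ s, g j) ≤ C ^ s.card * ∑ j ∈ s, f (g j) := by
  classical
  induction s using Finset.induction_on with
  | empty => simp [hf_zero]
  | @insert a s ha ih =>
    rw [Finset.sum_insert ha, Finset.sum_insert ha, Finset.card_insert_of_notMem ha]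
    calc f (g a + ∑ j ∈ s, g j) ≤ C * (f (g a) + f (∑ j ∈ s, g j)) := htri _ _
      _ ≤ C * (C ^ s.card * f (g a) + C ^ s.card * ∑ j ∈ s, f (g j)) := by
          gcongr
          · exact le_mul_of_one_le_left (hf _) (one_le_pow₀ hC)
      _ = C ^ (s.card + 1) * (f (g a) + ∑ j ∈ s, f (g j)) := by ring

theorem exists_pos_mul_norm_le {E : Type*} [NormedAddCommGroup E] [NormedSpace ℝ E]
    [FiniteDimensional ℝ E] {f : E → ℝ} (hf : Continuous f) (hpos : ∀ x ≠ 0, 0 < f x)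
    (hhom : ∀ (t : ℝ) x, f (t • x) = |t| * f x) :
    ∃ m > 0, ∀ x, m * ‖x‖ ≤ f x := by
  obtain ⟨m, hm, hmin⟩ := (isCompact_sphere (0 : E) 1).exists_forall_le' hf.continuousOn
    fun y hy => hpos y (by rintro rfl; simp at hy)
  refine ⟨m, hm, fun x => ?_⟩
  rcases eq_or_ne x 0 with rfl | hx
  · simpa using (hhom 0 0).ge
  have hunit : ‖x‖⁻¹ • x ∈ Metric.sphere (0 : E) 1 := by
    simpa using norm_smul_inv_norm (𝕜 := ℝ) hx
  calc m * ‖x‖ ≤ f (‖x‖⁻¹ • x) * ‖x‖ := by gcongr; exact hmin _ hunit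
    _ = f x := by
      rw [hhom, abs_of_pos (inv_pos.2 (norm_pos_iff.2 hx)), mul_comm, ← mul_assoc,
        mul_inv_cancel₀ (norm_ne_zero_iff.2 hx), one_mul]

namespace IsQuasiNorm

variable {d : ℕ} {f g : (Fin d → ℝ) → ℝ}

theorem pos (hf : IsQuasiNorm f) {x : Fin d → ℝ} (hx : x ≠ 0) : 0 < f x :=
  (hf.1 x).lt_of_ne fun h => hx ((hf.2.1 x).1 h.symm)

theorem exists_le_mul_norm (hf : IsQuasiNorm f) : ∃ A > 0, ∀ x, f x ≤ A * ‖x‖ := by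
  obtain ⟨hf0, hf_eq_zero, hhom, C, hC, htri⟩ := hf
  set e : Fin d → Fin d → ℝ := fun j => Pi.single j 1
  have he : 0 ≤ ∑ j, f (e j) := Finset.sum_nonneg fun j _ => hf0 (e j)
  refine ⟨C ^ d * ∑ j, f (e j) + 1, by positivity, fun x => ?_⟩
  have hx : x = ∑ j, x j • e j := by
    simp only [e, ← Pi.single_smul', smul_eq_mul, mul_one, Finset.univ_sum_single]
  calc f x = f (∑ j, x j • e j) := congrArg f hx
    _ ≤ C ^ d * ∑ j, f (x j • e j) := by
      simpa using Finset.apply_sum_le_pow_card_mul_sum hC hf0 ((hf_eq_zero 0).2 rfl) htri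
        Finset.univ fun j => x j • e j
    _ = C ^ d * ∑ j, |x j| * f (e j) := by simp only [hhom]
    _ ≤ C ^ d * ∑ j, ‖x‖ * f (e j) := by
      gcongr with j
      · exact hf0 _
      · exact norm_le_pi_norm x j
    _ ≤ (C ^ d * ∑ j, f (e j) + 1) * ‖x‖ := by
      rw [← Finset.mul_sum]; nlinarith [norm_nonneg x]

theorem exists_pos_mul_norm_le (hf : IsQuasiNorm f) (hfc : Continuous f) :
    ∃ m > 0, ∀ x, m * ‖x‖ ≤ f x :=
  _root_.exists_pos_mul_norm_le hfc (fun _ => hf.pos) hf.2.2.1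

theorem exists_ball_subset_smul_ball (hf : IsQuasiNorm f) (hfc : Continuous f)
    (hg : IsQuasiNorm g) : ∃ r : ℝ, 0 < r ∧ {x | f x ≤ 1} ⊆ r • {x | g x ≤ 1} := by
  obtain ⟨m, hm, hfm⟩ := hf.exists_pos_mul_norm_le hfc
  obtain ⟨A, hA, hgA⟩ := hg.exists_le_mul_norm
  refine ⟨A / m, by positivity, fun x hx => ?_⟩
  rw [Set.mem_smul_set_iff_inv_smul_mem₀ (by positivity)]
  have hnorm : ‖x‖ ≤ 1 / m := by
    rw [le_div_iff₀ hm]; linarith [hfm x, hx.out]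
  calc g ((A / m)⁻¹ • x) = (A / m)⁻¹ * g x := by rw [hg.2.2.1, abs_of_pos (by positivity)]
    _ ≤ (A / m)⁻¹ * (A * (1 / m)) := by gcongr; exact (hgA x).trans (by gcongr)
    _ = 1 := by field_simp

end IsQuasiNorm

theorem image_proj_ball_subset_image_proj_sphere {d : ℕ} (i : Fin d) {f : (Fin d → ℝ) → ℝ}
    (hf : IsQuasiNorm f) (hfc : Continuous f) :
    proj i '' {x | f x ≤ 1} ⊆ proj i '' {x | f x = 1} := by
  rintro _ ⟨x, hx, rfl⟩
  obtain ⟨m, hm, hfm⟩ := hf.exists_pos_mul_norm_le hfc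
  set T := max (x i) m⁻¹
  have hT : 1 ≤ f (Function.update x i T) :=
    calc 1 = m * m⁻¹ := (mul_inv_cancel₀ hm.ne').symm
      _ ≤ m * ‖Function.update x i T‖ := by
        gcongr
        calc m⁻¹ ≤ T := le_max_right _ _
          _ ≤ ‖T‖ := Real.le_norm_self T
          _ = ‖Function.update x i T i‖ := by rw [Function.update_self]
          _ ≤ _ := norm_le_pi_norm _ i
      _ ≤ _ := hfm _
  have hline : Continuous fun t : ℝ => f (Function.update x i t) :=
    hfc.comp (continuous_const.update i continuous_id)
  obtain ⟨t, -, ht⟩ := intermediate_value_Icc (le_max_left (x i) m⁻¹) hline.continuousOn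
    ⟨by simpa using hx.out, hT⟩
  exact ⟨Function.update x i t, ht, by simp [proj]⟩

theorem entropy_sphere_ge_proj_general (d : ℕ)
    (nX nY : (Fin d → ℝ) → ℝ)
    (hX : IsQuasiNorm nX) (hXc : Continuous nX) (hY : IsQuasiNorm nY)
    (k : ℕ) (i : Fin d) :
    entropyNumber (proj i '' {x | nX x ≤ 1}) (proj i '' {x | nY x ≤ 1}) k ≤
      entropyNumber {x | nX x = 1} {x | nY x ≤ 1} k := by
  obtain ⟨r, hr, hball⟩ := hX.exists_ball_subset_smul_ball hXc hY
  have hsphere : {x | nX x = 1} ⊆ r • {x | nY x ≤ 1} := fun x hx => hball hx.le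
  exact entropyNumber_le_entropyNumber (coveringRadii_nonempty_of_subset_smul hr hsphere)
    (coveringRadii_subset_image (projₗ i) (image_proj_ball_subset_image_proj_sphere i hX hXc))

/-- For a continuous quasi-norm `‖·‖_X` and a quasi-norm `‖·‖_Y` on `ℝ^d`
(`d ≥ 2`), every `k` and every coordinate `i`, the entropy numbers satisfy
`e_k(P_i(B_X), P_i(B_Y)) ≤ e_k(S_X, B_Y)`; in particular
`e_k(S_X, B_Y) ≥ max_i e_k(P_i(B_X), P_i(B_Y))`. -/
theorem entropy_sphere_ge_proj (d : ℕ) (hd : 2 ≤ d)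
    (nX nY : (Fin d → ℝ) → ℝ)
    (hX : IsQuasiNorm nX) (hXc : Continuous nX) (hY : IsQuasiNorm nY)
    (k : ℕ) (i : Fin d) :
    entropyNumber (proj i '' {x | nX x ≤ 1}) (proj i '' {x | nY x ≤ 1}) k ≤
      entropyNumber {x | nX x = 1} {x | nY x ≤ 1} k :=
  entropy_sphere_ge_proj_general d nX nY hX hXc hY k i
end

section
/- Let d ≥ 2 and let ‖·‖ be a continuous quasi-norm on ℝ^d that is monotone (for x, y in the same closed orthant with |x_j| ≤ |y_j| for all j one has ‖x‖ ≤ ‖y‖). Let x, y ∈ ℝ^d satisfy x_j ≥ 0 and y_j ≥ 0 for all j, x_d = y_d = 0, ‖x‖ ≤ 1 and ‖y‖ ≤ 1, and suppose σ, τ ∈ [0, 1] are the minimal shifts with ‖x + σ·𝟙‖ = 1 and ‖y + τ·𝟙‖ = 1. Then ‖(x + σ·𝟙) − (y + τ·𝟙)‖_∞ ≤ 2 ‖x − y‖_∞. -/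
open scoped Pointwise BigOperators

/-!
If `‖y + τ𝟙‖ = 1` and `δ = ‖x − y‖_∞`, then `x + (τ + δ)𝟙 ≥ y + τ𝟙 ≥ 0` coordinatewise, so by
monotonicity `‖x + (τ + δ)𝟙‖ ≥ 1 ≥ ‖x‖`. The intermediate value theorem yields a shift
`t ≤ τ + δ` with `‖x + t𝟙‖ = 1`, hence `σ ≤ τ + δ` by minimality. By symmetry `|σ − τ| ≤ δ`,
and the triangle inequality in each coordinate gives the bound `2δ`.
-/

lemma le_supNorm {d : ℕ} (x : Fin d → ℝ) (i : Fin d) : |x i| ≤ supNorm x :=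
  le_ciSup (f := fun i => |x i|) (Set.finite_range _).bddAbove i

lemma supNorm_nonneg {d : ℕ} (x : Fin d → ℝ) : 0 ≤ supNorm x :=
  Real.iSup_nonneg fun i => abs_nonneg (x i)

lemma supNorm_sub_comm {d : ℕ} (x y : Fin d → ℝ) : supNorm (x - y) = supNorm (y - x) := by
  simp only [supNorm, Pi.sub_apply, abs_sub_comm]

lemma IsMonotoneQuasiNorm.le_of_nonneg_of_le {d : ℕ} {n : (Fin d → ℝ) → ℝ}
    (hmono : IsMonotoneQuasiNorm n) {a b : Fin d → ℝ} (ha : ∀ j, 0 ≤ a j)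
    (hab : ∀ j, a j ≤ b j) : n a ≤ n b := by
  have hb : ∀ j, 0 ≤ b j := fun j => (ha j).trans (hab j)
  refine hmono a b (fun j => mul_nonneg (ha j) (hb j)) fun j => ?_
  rw [abs_of_nonneg (ha j), abs_of_nonneg (hb j)]
  exact hab j

lemma exists_mem_Icc_apply_add_smul_eq {E : Type*} [TopologicalSpace E] [AddCommGroup E]
    [Module ℝ E] [ContinuousAdd E] [ContinuousSMul ℝ E] {n : E → ℝ} (hnc : Continuous n)
    (x v : E) {s c : ℝ} (hs : 0 ≤ s) (hx : n x ≤ c) (hxs : c ≤ n (x + s • v)) :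
    ∃ t ∈ Set.Icc 0 s, n (x + t • v) = c := by
  have hcont : ContinuousOn (fun t : ℝ => n (x + t • v)) (Set.Icc 0 s) := by fun_prop
  exact intermediate_value_Icc hs hcont ⟨by simpa using hx, hxs⟩

lemma IsMonotoneQuasiNorm.minShift_le_add_supNorm_sub {d : ℕ} {n : (Fin d → ℝ) → ℝ}
    (hmono : IsMonotoneQuasiNorm n) (hnc : Continuous n) {x y : Fin d → ℝ}
    (hy : ∀ j, 0 ≤ y j) (hx1 : n x ≤ 1) {σ τ : ℝ} (hτ : 0 ≤ τ)
    (hσmin : ∀ t : ℝ, 0 ≤ t → n (x + t • (1 : Fin d → ℝ)) = 1 → σ ≤ t)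
    (hτ1 : n (y + τ • (1 : Fin d → ℝ)) = 1) :
    σ ≤ τ + supNorm (x - y) := by
  set δ := supNorm (x - y)
  have hreach : 1 ≤ n (x + (τ + δ) • (1 : Fin d → ℝ)) := by
    rw [← hτ1]
    refine hmono.le_of_nonneg_of_le (fun j => ?_) fun j => ?_
    · simp only [Pi.add_apply, Pi.smul_apply, Pi.one_apply, smul_eq_mul, mul_one]
      linarith [hy j]
    · have hyx : y j - x j ≤ δ := by
        have hxy := le_supNorm (x - y) j
        rw [Pi.sub_apply, abs_sub_comm] at hxy
        exact (le_abs_self _).trans hxy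
      simp only [Pi.add_apply, Pi.smul_apply, Pi.one_apply, smul_eq_mul, mul_one]
      linarith
  obtain ⟨t, ht, hnt⟩ := exists_mem_Icc_apply_add_smul_eq hnc x 1
    (add_nonneg hτ (supNorm_nonneg _)) hx1 hreach
  exact (hσmin t ht.1 hnt).trans ht.2

/-- Let `‖·‖` be a continuous monotone quasi-norm on `ℝ^d` (`d ≥ 2`),
let `x, y` have nonnegative coordinates with `x_d = y_d = 0`, `‖x‖ ≤ 1`, `‖y‖ ≤ 1`, and let
`σ, τ ∈ [0,1]` be the minimal shifts with `‖x + σ·𝟙‖ = 1` and `‖y + τ·𝟙‖ = 1`. Then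
`‖(x + σ·𝟙) − (y + τ·𝟙)‖_∞ ≤ 2‖x − y‖_∞`. -/
theorem shift_lipschitz_general (d : ℕ)
    (n : (Fin d → ℝ) → ℝ) (hnc : Continuous n)
    (hmono : IsMonotoneQuasiNorm n)
    (x y : Fin d → ℝ) (hx : ∀ j, 0 ≤ x j) (hy : ∀ j, 0 ≤ y j)
    (hx1 : n x ≤ 1) (hy1 : n y ≤ 1)
    (σ τ : ℝ) (hσ : σ ∈ Set.Icc (0 : ℝ) 1) (hτ : τ ∈ Set.Icc (0 : ℝ) 1)
    (hσ1 : n (x + σ • (1 : Fin d → ℝ)) = 1)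
    (hσmin : ∀ t : ℝ, 0 ≤ t → n (x + t • (1 : Fin d → ℝ)) = 1 → σ ≤ t)
    (hτ1 : n (y + τ • (1 : Fin d → ℝ)) = 1)
    (hτmin : ∀ t : ℝ, 0 ≤ t → n (y + t • (1 : Fin d → ℝ)) = 1 → τ ≤ t) :
    supNorm ((x + σ • (1 : Fin d → ℝ)) - (y + τ • (1 : Fin d → ℝ))) ≤
      2 * supNorm (x - y) := by
  have hστ : |σ - τ| ≤ supNorm (x - y) := abs_sub_le_iff.2
    ⟨by linarith [hmono.minShift_le_add_supNorm_sub hnc hy hx1 hτ.1 hσmin hτ1],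
     by linarith [hmono.minShift_le_add_supNorm_sub hnc hx hy1 hσ.1 hτmin hσ1,
       supNorm_sub_comm x y]⟩
  refine Real.iSup_le (fun j => ?_) (by linarith [supNorm_nonneg (x - y)])
  calc |((x + σ • (1 : Fin d → ℝ)) - (y + τ • (1 : Fin d → ℝ))) j|
      = |(x j - y j) + (σ - τ)| := by
        simp only [Pi.sub_apply, Pi.add_apply, Pi.smul_apply, Pi.one_apply, smul_eq_mul, mul_one]
        ring_nf
    _ ≤ |x j - y j| + |σ - τ| := abs_add_le _ _
    _ ≤ 2 * supNorm (x - y) := by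
        have hxy := le_supNorm (x - y) j
        rw [Pi.sub_apply] at hxy
        linarith
end

section
/- Let d ≥ 2 and let ‖·‖_X and ‖·‖_Y be symmetric norms on ℝ^d (invariant under permutations of coordinates and sign changes) with ‖e_i‖_X = ‖e_i‖_Y = 1 for the standard basis vectors. Set λ_X(ℓ) := ‖∑_{i=1}^ℓ e_i‖_X and λ_Y(ℓ) := ‖∑_{i=1}^ℓ e_i‖_Y. Then for all natural numbers k with 1 ≤ k ≤ d − 1, the entropy numbers satisfy e_k(S_X, B_Y) ≥ (1/(2e)) · max_{ℓ = k, …, d−1} λ_Y(ℓ)/λ_X(ℓ), where S_X = {x : ‖x‖_X = 1} and B_Y = {x : ‖x‖_Y ≤ 1}. -/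
open scoped Pointwise BigOperators

/-- A symmetric norm on `ℝ^d`: a norm invariant under permutations of coordinates and under
sign changes. -/
def IsSymmNorm {d : ℕ} (f : (Fin d → ℝ) → ℝ) : Prop :=
  (∀ x, 0 ≤ f x) ∧ (∀ x, f x = 0 ↔ x = 0) ∧
  (∀ (l : ℝ) (x), f (l • x) = |l| * f x) ∧
  (∀ x y, f (x + y) ≤ f x + f y) ∧
  (∀ (π : Equiv.Perm (Fin d)) (ε : Fin d → ℝ), (∀ i, ε i = 1 ∨ ε i = -1) →
    ∀ x : Fin d → ℝ, f (fun i => ε i * x (π i)) = f x)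

/-- `λ_E(ℓ) = ‖∑_{i=1}^ℓ e_i‖_E`, the norm of the sum of the first `ℓ` standard basis
vectors. -/
noncomputable def lam {d : ℕ} (f : (Fin d → ℝ) → ℝ) (l : ℕ) : ℝ :=
  f (fun i => if (i : ℕ) < l then 1 else 0)

/-!
Fix `ℓ` with `k ≤ ℓ < d` and a cover of `S_X` by `N = 2^(k-1)` translates of `ε B_Y`. Every
`y ∈ ℝ^ℓ` with `‖(y, 0)‖_X ≤ 1` lifts to a point of `S_X` by moving the `(ℓ+1)`-st coordinate,
and zeroing coordinates does not increase a symmetric norm, so projecting onto the first `ℓ`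
coordinates covers the unit ball of the induced norm `X_ℓ` by `N` translates of `ε B_{Y_ℓ}`.
Now compare volumes: `B_{X_ℓ}` contains the cube of side `2/λ_X(ℓ)`, and averaging cyclic shifts
shows that `B_{Y_ℓ}` lies in the `ℓ¹`-ball of radius `ℓ/λ_Y(ℓ)`. Hence
`(2/λ_X(ℓ))^ℓ ≤ 2^(k-1) ε^ℓ (2ℓ/λ_Y(ℓ))^ℓ / ℓ!`, and `ℓ! ≥ (ℓ/e)^ℓ` gives the bound.
-/

open MeasureTheory

theorem Seminorm.exists_map_add_smul_eq_one {E : Type*} [AddCommGroup E] [Module ℝ E]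
    (p : Seminorm ℝ E) {x v : E} (hx : p x ≤ 1) (hv : 0 < p v) :
    ∃ t : ℝ, p (x + t • v) = 1 := by
  have hcont : Continuous fun t : ℝ => p (x + t • v) := by
    refine (LipschitzWith.of_dist_le_mul (K := ⟨p v, hv.le⟩) fun s t => ?_).continuous
    calc dist (p (x + s • v)) (p (x + t • v)) ≤ p (x + s • v - (x + t • v)) :=
          abs_sub_map_le_sub p _ _
      _ = p v * dist s t := by
          rw [add_sub_add_left_eq_sub, ← sub_smul, map_smul_eq_mul, mul_comm]; rfl
  set T := (1 + p x) / p v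
  have hT : 1 ≤ p (x + T • v) := by
    have h := map_sub_le_add p (x + T • v) x
    rw [add_sub_cancel_left, map_smul_eq_mul, Real.norm_eq_abs,
      abs_of_nonneg (by positivity), div_mul_cancel₀ _ hv.ne'] at h
    linarith
  obtain ⟨t, -, ht⟩ := intermediate_value_Icc (by positivity : (0 : ℝ) ≤ T) hcont.continuousOn
    ⟨by simpa using hx, hT⟩
  exact ⟨t, ht⟩

theorem MeasureTheory.Measure.addHaar_le_of_subset_iUnion_vadd_smul {E : Type*}
    [NormedAddCommGroup E] [NormedSpace ℝ E] [MeasurableSpace E] [BorelSpace E]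
    [FiniteDimensional ℝ E] (μ : Measure E) [μ.IsAddHaarMeasure] {ι : Type*} [Fintype ι]
    {K B : Set E} {c : ι → E} {ε : ℝ} (hε : 0 ≤ ε) (hK : K ⊆ ⋃ j, c j +ᵥ ε • B) :
    μ K ≤ Fintype.card ι * (ENNReal.ofReal (ε ^ Module.finrank ℝ E) * μ B) :=
  calc μ K ≤ ∑ j, μ (c j +ᵥ ε • B) := (measure_mono hK).trans (measure_iUnion_fintype_le _ _)
    _ = Fintype.card ι * (ENNReal.ofReal (ε ^ Module.finrank ℝ E) * μ B) := by
      simp [measure_vadd, Measure.addHaar_smul_of_nonneg μ hε]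

lemma le_of_pow_le_mul_pow_div_factorial {n N : ℕ} {a b ε : ℝ} (hn : n ≠ 0) (ha : 0 < a)
    (hb : 0 < b) (hε : 0 ≤ ε) (hN : N ≤ 2 ^ n)
    (h : (2 / a) ^ n ≤ N * (ε ^ n * ((2 * n / b) ^ n / n.factorial))) :
    1 / (2 * Real.exp 1) * (b / a) ≤ ε := by
  have hfac : ((n : ℝ) / Real.exp 1) ^ n ≤ n.factorial := by
    have := Real.pow_div_factorial_le_exp (n : ℝ) (Nat.cast_nonneg n) n
    rw [div_le_iff₀ (by positivity), ← Real.exp_one_pow] at this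
    rw [div_pow, div_le_iff₀ (by positivity)]
    linarith
  have key : (2 * n / (Real.exp 1 * a)) ^ n ≤ (4 * n * ε / b) ^ n :=
    calc (2 * n / (Real.exp 1 * a)) ^ n = (2 / a) ^ n * (n / Real.exp 1) ^ n := by
          rw [← mul_pow]; ring_nf
      _ ≤ (2 / a) ^ n * n.factorial := by gcongr
      _ ≤ N * (ε ^ n * ((2 * n / b) ^ n / n.factorial)) * n.factorial := by gcongr
      _ = N * (ε * (2 * n / b)) ^ n := by field_simp; ring
      _ ≤ 2 ^ n * (ε * (2 * n / b)) ^ n := by gcongr; exact_mod_cast hN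
      _ = (4 * n * ε / b) ^ n := by rw [← mul_pow]; ring
  have hlin := (pow_le_pow_iff_left₀ (by positivity) (by positivity) hn).mp key
  have hn' : (0 : ℝ) < n := by positivity
  rw [div_le_div_iff₀ (by positivity) hb] at hlin
  rw [div_mul_div_comm, one_mul, div_le_iff₀ (by positivity)]
  nlinarith

noncomputable def zeroExtend {l d : ℕ} (h : l ≤ d) : (Fin l → ℝ) →ₗ[ℝ] Fin d → ℝ :=
  Function.ExtendByZero.linearMap ℝ (Fin.castLE h)

lemma zeroExtend_apply {l d : ℕ} (h : l ≤ d) (y : Fin l → ℝ) (j : Fin d) :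
    zeroExtend h y j = if hj : (j : ℕ) < l then y ⟨j, hj⟩ else 0 := by
  simp only [zeroExtend, Function.ExtendByZero.linearMap_apply]
  split_ifs with hj
  · exact (Fin.castLE_injective h).extend_apply y 0 ⟨j, hj⟩
  · exact Function.extend_apply' _ _ _ fun ⟨i, hi⟩ => hj (hi ▸ i.isLt)

lemma zeroExtend_apply_castLE {l d : ℕ} (h : l ≤ d) (y : Fin l → ℝ) (i : Fin l) :
    zeroExtend h y (Fin.castLE h i) = y i :=
  (Fin.castLE_injective h).extend_apply y 0 i

namespace IsSymmNorm

variable {d l : ℕ} {f g : (Fin d → ℝ) → ℝ}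

def toSeminorm (hf : IsSymmNorm f) : Seminorm ℝ (Fin d → ℝ) :=
  Seminorm.of f hf.2.2.2.1 hf.2.2.1

lemma map_smul_eq_abs_mul (hf : IsSymmNorm f) (a : ℝ) (x : Fin d → ℝ) :
    f (a • x) = |a| * f x :=
  hf.2.2.1 a x

lemma map_abs_comp (hf : IsSymmNorm f) (π : Equiv.Perm (Fin d)) (x : Fin d → ℝ) :
    f (fun i => |x (π i)|) = f x := by
  rw [← hf.2.2.2.2 π (fun i => if x (π i) < 0 then -1 else 1) (fun i => by split_ifs <;> simp) x]
  congr 1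
  ext i
  split_ifs with h
  · rw [abs_of_neg h, neg_one_mul]
  · rw [abs_of_nonneg (not_lt.mp h), one_mul]

lemma map_eq_of_abs_eq (hf : IsSymmNorm f) {x y : Fin d → ℝ} (h : ∀ i, |x i| = |y i|) :
    f x = f y := by
  rw [← hf.map_abs_comp 1 x, ← hf.map_abs_comp 1 y]
  simp [h]

lemma mono (hf : IsSymmNorm f) {x y : Fin d → ℝ} (h : ∀ i, |x i| ≤ |y i|) : f x ≤ f y := by
  have hx : x ∈ convexHull ℝ (Set.univ.pi fun i => {y i, -y i}) := by
    rw [convexHull_pi]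
    intro i _
    show x i ∈ convexHull ℝ {y i, -y i}
    rw [convexHull_pair, segment_eq_uIcc, Set.mem_uIcc]
    have := abs_le.mp (h i)
    rcases le_total 0 (y i) with hy | hy
    · rw [abs_of_nonneg hy] at this; exact Or.inr ⟨this.1, this.2⟩
    · rw [abs_of_nonpos hy] at this; exact Or.inl ⟨by linarith, by linarith⟩
  obtain ⟨z, hz, hxz⟩ := hf.toSeminorm.convexOn.exists_ge_of_mem_convexHull
    (Set.subset_univ _) hx
  refine hxz.trans_eq (hf.map_eq_of_abs_eq fun i => ?_)
  obtain hzi | hzi : z i = y i ∨ z i = -y i := hz i trivial <;> simp [hzi]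

lemma map_sum_le (hf : IsSymmNorm f) {ι : Type*} (s : Finset ι) (x : ι → Fin d → ℝ) :
    f (∑ i ∈ s, x i) ≤ ∑ i ∈ s, f (x i) :=
  Finset.le_sum_of_subadditive f (map_zero hf.toSeminorm).le hf.2.2.2.1 s x

lemma abs_apply_mul_le (hf : IsSymmNorm f) (x : Fin d → ℝ) (i : Fin d) :
    |x i| * f (Pi.single i 1) ≤ f x := by
  rw [← hf.map_smul_eq_abs_mul]
  refine hf.mono fun j => ?_
  rcases eq_or_ne j i with rfl | hj <;> simp [*]

lemma le_sum_abs_mul (hf : IsSymmNorm f) (x : Fin d → ℝ) :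
    f x ≤ ∑ i, |x i| * f (Pi.single i 1) := by
  conv_lhs => rw [← Finset.univ_sum_single x]
  refine (hf.map_sum_le _ _).trans_eq ?_
  congr 1 with i
  rw [← hf.map_smul_eq_abs_mul, ← Pi.single_smul', smul_eq_mul, mul_one]

lemma map_pos (hf : IsSymmNorm f) {x : Fin d → ℝ} (hx : x ≠ 0) : 0 < f x :=
  (hf.1 x).lt_of_ne fun h => hx ((hf.2.1 x).mp h.symm)

lemma map_le_mul_map_one (hf : IsSymmNorm f) {r : ℝ} (hr : 0 ≤ r) {y : Fin d → ℝ}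
    (hy : ∀ i, |y i| ≤ r) : f y ≤ r * f 1 := by
  rw [← abs_of_nonneg hr, ← hf.map_smul_eq_abs_mul]
  exact hf.mono fun i => by simpa [abs_of_nonneg hr] using hy i

-- Averaging the cyclic shifts of `|y|` gives the constant vector `(∑ i, |y i|) / d`.
lemma sum_abs_mul_map_one_le (hf : IsSymmNorm f) (y : Fin d → ℝ) :
    (∑ i, |y i|) * f 1 ≤ d * f y := by
  rcases Nat.eq_zero_or_pos d with rfl | hn
  · simp
  have : NeZero d := ⟨hn.ne'⟩
  have hsum : ∑ j : Fin d, (fun i => |y (i + j)|) = (∑ i, |y i|) • (1 : Fin d → ℝ) := by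
    ext i
    simp only [Finset.sum_apply, Pi.smul_apply, Pi.one_apply, smul_eq_mul, mul_one]
    exact Fintype.sum_equiv (Equiv.addLeft i) _ _ fun j => rfl
  calc (∑ i, |y i|) * f 1 = f (∑ j : Fin d, fun i => |y (i + j)|) := by
        rw [hsum, hf.map_smul_eq_abs_mul,
          abs_of_nonneg (Finset.sum_nonneg fun i _ => abs_nonneg _)]
    _ ≤ ∑ j : Fin d, f (fun i => |y (i + j)|) := hf.map_sum_le _ _
    _ = d * f y := by
        have hshift (j : Fin d) : f (fun i => |y (i + j)|) = f y :=
          hf.map_abs_comp (Equiv.addRight j) y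
        simp only [hshift, Finset.sum_const, Finset.card_univ, Fintype.card_fin, nsmul_eq_mul]

lemma ofReal_le_volume_unitBall (hf : IsSymmNorm f) (h1 : 0 < f 1) :
    ENNReal.ofReal ((2 / f 1) ^ d) ≤ volume {y | f y ≤ 1} := by
  have hcube : Set.univ.pi (fun _ => Set.Icc (-(1 / f 1)) (1 / f 1)) ⊆ {y | f y ≤ 1} :=
    fun y hy => (hf.map_le_mul_map_one (one_div_pos.mpr h1).le fun i =>
      abs_le.mpr (hy i trivial)).trans_eq (one_div_mul_cancel h1.ne')
  refine le_of_eq_of_le ?_ (measure_mono hcube)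
  rw [volume_pi_pi]
  simp only [Real.volume_Icc, Finset.prod_const, Finset.card_univ, Fintype.card_fin]
  rw [show 1 / f 1 - -(1 / f 1) = 2 / f 1 by ring, ← ENNReal.ofReal_pow (div_pos two_pos h1).le]

lemma volume_unitBall_le (hf : IsSymmNorm f) (h1 : 0 < f 1) (hn : d ≠ 0) :
    volume {y | f y ≤ 1} ≤ ENNReal.ofReal ((2 * d / f 1) ^ d / d.factorial) := by
  have : Nonempty (Fin d) := ⟨⟨0, Nat.pos_of_ne_zero hn⟩⟩
  have hball : {y | f y ≤ 1} ⊆ {y : Fin d → ℝ | ∑ i, |y i| ≤ d / f 1} :=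
    fun y (hy : f y ≤ 1) => by
      rw [Set.mem_ofPred, le_div_iff₀ h1]
      nlinarith [hf.sum_abs_mul_map_one_le y]
  have hl1 := volume_sum_rpow_le (ι := Fin d) le_rfl (d / f 1)
  simp only [Real.rpow_one, div_one, Fintype.card_fin, one_add_one_eq_two, Real.Gamma_two,
    mul_one, Real.Gamma_nat_eq_factorial] at hl1
  refine (measure_mono hball).trans_eq ?_
  rw [hl1, ← ENNReal.ofReal_pow (by positivity), ← ENNReal.ofReal_mul (by positivity)]
  congr 1
  field_simp
  ring

lemma le_of_unitBall_subset_iUnion (hf : IsSymmNorm f) (hg : IsSymmNorm g) (hn : d ≠ 0)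
    {N : ℕ} (hN : N ≤ 2 ^ d) {ε : ℝ} (hε : 0 < ε) {c : Fin N → Fin d → ℝ}
    (hcov : {y | f y ≤ 1} ⊆ ⋃ j, c j +ᵥ ε • {y | g y ≤ 1}) :
    1 / (2 * Real.exp 1) * (g 1 / f 1) ≤ ε := by
  have h1 : (1 : Fin d → ℝ) ≠ 0 := fun h => one_ne_zero (congrFun h ⟨0, Nat.pos_of_ne_zero hn⟩)
  have hf1 := hf.map_pos h1
  have hg1 := hg.map_pos h1
  refine le_of_pow_le_mul_pow_div_factorial hn hf1 hg1 hε.le hN ?_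
  rw [← ENNReal.ofReal_le_ofReal_iff (by positivity)]
  calc ENNReal.ofReal ((2 / f 1) ^ d) ≤ volume {y | f y ≤ 1} := hf.ofReal_le_volume_unitBall hf1
    _ ≤ N * (ENNReal.ofReal (ε ^ d) * volume {y | g y ≤ 1}) := by
      simpa using volume.addHaar_le_of_subset_iUnion_vadd_smul hε.le hcov
    _ ≤ N * (ENNReal.ofReal (ε ^ d) * ENNReal.ofReal ((2 * d / g 1) ^ d / d.factorial)) := by
      gcongr
      exact hg.volume_unitBall_le hg1 hn
    _ = ENNReal.ofReal (N * (ε ^ d * ((2 * d / g 1) ^ d / d.factorial))) := by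
      rw [ENNReal.ofReal_mul (by positivity), ENNReal.ofReal_mul (by positivity),
        ENNReal.ofReal_natCast]

lemma comp_zeroExtend (hf : IsSymmNorm f) (h : l ≤ d) : IsSymmNorm (f ∘ zeroExtend h) := by
  refine ⟨fun y => hf.1 _, fun y => ?_, fun a y => by simp [hf.map_smul_eq_abs_mul],
    fun y z => by simpa using hf.2.2.2.1 _ _, fun π ε hε y => ?_⟩
  · rw [Function.comp_apply, hf.2.1, LinearMap.map_eq_zero_iff]
    exact Function.extend_injective (Fin.castLE_injective h) 0
  · set π' := π.extendDomain (Fin.castLEquiv h)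
    have hε' : ∀ j : Fin d, (if hj : (j : ℕ) < l then ε ⟨j, hj⟩ else 1) = 1 ∨
        (if hj : (j : ℕ) < l then ε ⟨j, hj⟩ else 1) = -1 := fun j => by
      split_ifs
      exacts [hε _, Or.inl rfl]
    rw [Function.comp_apply, Function.comp_apply, ← hf.2.2.2.2 π' _ hε' (zeroExtend h y)]
    congr 1
    ext j
    by_cases hj : (j : ℕ) < l
    · simp [zeroExtend_apply, hj, π', Equiv.Perm.extendDomain_apply_subtype]
    · simp [zeroExtend_apply, hj, π', Equiv.Perm.extendDomain_apply_not_subtype]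

lemma lam_eq_map_zeroExtend_one (h : l ≤ d) : lam f l = f (zeroExtend h 1) := by
  unfold lam
  congr 1 with j
  simp [zeroExtend_apply]

lemma map_le_mul (hf : IsSymmNorm f) (hg : IsSymmNorm g) (x : Fin d → ℝ) :
    g x ≤ (∑ i, g (Pi.single i 1) / f (Pi.single i 1)) * f x := by
  rw [Finset.sum_mul]
  refine (hg.le_sum_abs_mul x).trans (Finset.sum_le_sum fun i _ => ?_)
  have hfi := hf.map_pos (Pi.single_ne_zero_iff.mpr one_ne_zero : Pi.single i (1 : ℝ) ≠ 0)
  rw [div_mul_eq_mul_div, le_div_iff₀ hfi, mul_right_comm, mul_comm (g _)]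
  exact mul_le_mul_of_nonneg_right (hf.abs_apply_mul_le x i) (hg.1 _)

lemma exists_unitSphere_subset_smul_unitBall (hf : IsSymmNorm f) (hg : IsSymmNorm g) :
    ∃ ε : ℝ, 0 < ε ∧ {x | f x = 1} ⊆ ε • {x | g x ≤ 1} := by
  set C := ∑ i, g (Pi.single i 1) / f (Pi.single i 1)
  have hC : 0 ≤ C := Finset.sum_nonneg fun i _ => div_nonneg (hg.1 _) (hf.1 _)
  refine ⟨C + 1, by positivity, fun x (hx : f x = 1) => ?_⟩
  rw [Set.mem_smul_set_iff_inv_smul_mem₀ (by positivity), Set.mem_ofPred,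
    hg.map_smul_eq_abs_mul, abs_inv, abs_of_pos (by positivity), inv_mul_le_iff₀ (by positivity),
    mul_one]
  have hgx : g x ≤ C * f x := hf.map_le_mul hg x
  rw [hx, mul_one] at hgx
  linarith

lemma exists_unitBall_comp_zeroExtend_subset_iUnion (hf : IsSymmNorm f) (hg : IsSymmNorm g)
    (hld : l < d) {ι : Type*} {c : ι → Fin d → ℝ} {ε : ℝ}
    (hcov : {x | f x = 1} ⊆ ⋃ j, c j +ᵥ ε • {x | g x ≤ 1}) :
    ∃ c' : ι → Fin l → ℝ, {y | (f ∘ zeroExtend hld.le) y ≤ 1} ⊆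
      ⋃ j, c' j +ᵥ ε • {y | (g ∘ zeroExtend hld.le) y ≤ 1} := by
  set R := LinearMap.funLeft ℝ ℝ (Fin.castLE hld.le)
  refine ⟨fun j => R (c j), fun y (hy : f (zeroExtend hld.le y) ≤ 1) => ?_⟩
  set e : Fin d → ℝ := Pi.single ⟨l, hld⟩ 1
  have he : e ≠ 0 := Pi.single_ne_zero_iff.mpr one_ne_zero
  obtain ⟨t, ht⟩ := hf.toSeminorm.exists_map_add_smul_eq_one hy (hf.map_pos he)
  obtain ⟨j, hj⟩ := Set.mem_iUnion.mp (hcov ht)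
  obtain ⟨_, ⟨b, hb, rfl⟩, hz⟩ := Set.mem_vadd_set.mp hj
  refine Set.mem_iUnion.mpr ⟨j, Set.mem_vadd_set.mpr ⟨ε • R b, Set.smul_mem_smul_set ?_, ?_⟩⟩
  · refine (hg.mono fun i => ?_).trans hb
    rw [zeroExtend_apply]
    split_ifs
    · rfl
    · simp
  · have hRz : R (zeroExtend hld.le y + t • e) = y := by
      ext i
      have hi : Fin.castLE hld.le i ≠ ⟨l, hld⟩ := fun h => i.isLt.ne (congrArg Fin.val h)
      simp [R, zeroExtend_apply_castLE, e, hi]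
    rw [← hRz, ← hz, vadd_eq_add, vadd_eq_add, map_add, map_smul]

end IsSymmNorm

lemma le_entropyNumber {d k : ℕ} {K B : Set (Fin d → ℝ)} {a : ℝ}
    (hK : ∃ ε : ℝ, 0 < ε ∧ K ⊆ ε • B)
    (h : ∀ ε > 0, ∀ c : Fin (2 ^ (k - 1)) → Fin d → ℝ, K ⊆ ⋃ j, c j +ᵥ ε • B → a ≤ ε) :
    a ≤ entropyNumber K B k := by
  obtain ⟨ε, hε, hKB⟩ := hK
  exact le_csInf ⟨ε, hε, fun _ => 0, fun x hx => Set.mem_iUnion.mpr ⟨0, by simpa using hKB hx⟩⟩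
    fun ε ⟨hε, c, hc⟩ => h ε hε c hc

theorem entropy_symm_lower_small_general (d : ℕ)
    (nX nY : (Fin d → ℝ) → ℝ) (hX : IsSymmNorm nX) (hY : IsSymmNorm nY)
    (k : ℕ) (hk1 : 1 ≤ k)
    (l : ℕ) (hl1 : k ≤ l) (hl2 : l ≤ d - 1) :
    (1 / (2 * Real.exp 1)) * (lam nY l / lam nX l) ≤
      entropyNumber {x | nX x = 1} {x | nY x ≤ 1} k := by
  have hld : l < d := by omega
  refine le_entropyNumber (hX.exists_unitSphere_subset_smul_unitBall hY) fun ε hε c hcov => ?_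
  obtain ⟨c', hc'⟩ := hX.exists_unitBall_comp_zeroExtend_subset_iUnion hY hld hcov
  rw [IsSymmNorm.lam_eq_map_zeroExtend_one hld.le, IsSymmNorm.lam_eq_map_zeroExtend_one hld.le]
  exact (hX.comp_zeroExtend hld.le).le_of_unitBall_subset_iUnion (hY.comp_zeroExtend hld.le)
    (by omega) (Nat.pow_le_pow_right two_pos (by omega)) hε hc'

/-- For symmetric norms `‖·‖_X`, `‖·‖_Y` on `ℝ^d` (`d ≥ 2`) with normalized
standard basis vectors, and `1 ≤ k ≤ d − 1`,
`e_k(S_X, B_Y) ≥ (1/(2e)) · max_{ℓ=k,…,d−1} λ_Y(ℓ)/λ_X(ℓ)`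
(stated as the bound for every `ℓ` with `k ≤ ℓ ≤ d − 1`). -/
theorem entropy_symm_lower_small (d : ℕ) (hd : 2 ≤ d)
    (nX nY : (Fin d → ℝ) → ℝ) (hX : IsSymmNorm nX) (hY : IsSymmNorm nY)
    (hXe : ∀ i : Fin d, nX (Pi.single i 1) = 1)
    (hYe : ∀ i : Fin d, nY (Pi.single i 1) = 1)
    (k : ℕ) (hk1 : 1 ≤ k) (hkd : k ≤ d - 1)
    (l : ℕ) (hl1 : k ≤ l) (hl2 : l ≤ d - 1) :
    (1 / (2 * Real.exp 1)) * (lam nY l / lam nX l) ≤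
      entropyNumber {x | nX x = 1} {x | nY x ≤ 1} k :=
  entropy_symm_lower_small_general d nX nY hX hY k hk1 l hl1 hl2
end
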